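/- arXiv:2006.13785 — 2 statements merged into one kernel-verified Lean document; each statement's English description precedes it below -/
import Mathlib

section
/- Let R be a reduced ring and r, s ∈ R with 0 ≠ k₁ ≤_rr r and k₁ ≤_rr s. If k₂ is a nonzero element with k₂ ≤_rr r and k₂ ≤_rr s + k₁, then k₁k₂ = 0 and k₁ ≤_rr k₁ + k₂, and k₁ + k₂ is an rr-lower bound of both r and s. -/
/-!
Write `a ≤ b` for `a * a = a * b`. In a reduced ring `a * b = 0` forces `b * a = 0` and
`a * c * b = 0` for every `c`. From `k₁ ≤ r, s` we get `k₁ (r - s) = 0`, and from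
`k₂ ≤ r, s + k₁` we get `k₂ k₁ = k₂ (r - s)`. Hence `(k₂ k₁)² = k₂ ((r - s) k₂ k₁) = 0`, so
`k₁` and `k₂` are orthogonal. Then `k₂ ≤ s`, and the sum of orthogonal lower bounds of an
element is again a lower bound of it.
-/

namespace IsReduced

variable {R : Type*} [Ring R] [IsReduced R] {a b : R}

theorem eq_zero_of_mul_self_eq_zero (h : a * a = 0) : a = 0 :=
  sq_eq_zero_iff.mp (by rw [sq, h])

theorem mul_eq_zero_symm (h : a * b = 0) : b * a = 0 :=
  eq_zero_of_mul_self_eq_zero <| by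
    rw [mul_assoc, ← mul_assoc a, h, zero_mul, mul_zero]

theorem mul_mul_eq_zero_of_mul_eq_zero (h : a * b = 0) (c : R) : a * c * b = 0 :=
  eq_zero_of_mul_self_eq_zero <| by
    rw [mul_assoc, ← mul_assoc b, ← mul_assoc b, mul_eq_zero_symm h, zero_mul, zero_mul,
      mul_zero]

end IsReduced

theorem add_mul_self_eq_add_mul_of_mul_eq_zero {R : Type*} [Ring R] {a b r : R}
    (ha : a * a = a * r) (hb : b * b = b * r) (hab : a * b = 0) (hba : b * a = 0) :
    (a + b) * (a + b) = (a + b) * r := by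
  rw [add_mul, mul_add, mul_add, ha, hb, hab, hba, add_zero, zero_add, add_mul]

theorem stmt_7_general {R : Type*} [Ring R] [IsReduced R] (r s k₁ k₂ : R)
    (h1r : k₁ * k₁ = k₁ * r) (h1s : k₁ * k₁ = k₁ * s)
    (h2r : k₂ * k₂ = k₂ * r) (h2s : k₂ * k₂ = k₂ * (s + k₁)) :
    k₁ * k₂ = 0 ∧ k₁ * k₁ = k₁ * (k₁ + k₂) ∧
      (k₁ + k₂) * (k₁ + k₂) = (k₁ + k₂) * r ∧
      (k₁ + k₂) * (k₁ + k₂) = (k₁ + k₂) * s := by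
  have hrs_k₁ : (r - s) * k₁ = 0 :=
    IsReduced.mul_eq_zero_symm (by rw [mul_sub, ← h1r, ← h1s, sub_self])
  have hk₂k₁ : k₂ * k₁ = k₂ * (r - s) := by
    rw [mul_sub, ← h2r, h2s, mul_add, add_sub_cancel_left]
  have h21 : k₂ * k₁ = 0 := IsReduced.eq_zero_of_mul_self_eq_zero <|
    calc k₂ * k₁ * (k₂ * k₁) = k₂ * ((r - s) * k₂ * k₁) := by
          nth_rw 1 [hk₂k₁]; simp only [mul_assoc]
      _ = 0 := by rw [IsReduced.mul_mul_eq_zero_of_mul_eq_zero hrs_k₁, mul_zero]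
  have h12 : k₁ * k₂ = 0 := IsReduced.mul_eq_zero_symm h21
  have h2s' : k₂ * k₂ = k₂ * s := by rw [h2s, mul_add, h21, add_zero]
  exact ⟨h12, by rw [mul_add, h12, add_zero],
    add_mul_self_eq_add_mul_of_mul_eq_zero h1r h2r h12 h21,
    add_mul_self_eq_add_mul_of_mul_eq_zero h1s h2s' h12 h21⟩

/-- Lemma on lower bounds: if `0 ≠ k₁ ≤rr r, s` and `0 ≠ k₂ ≤rr r, s + k₁`,
then `k₁k₂ = 0`, `k₁ ≤rr k₁ + k₂`, and `k₁ + k₂` is an rr-lower bound of `r` and `s`. -/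
theorem stmt_7 {R : Type*} [Ring R] [IsReduced R] (r s k₁ k₂ : R)
    (hk₁ : k₁ ≠ 0) (h1r : k₁ * k₁ = k₁ * r) (h1s : k₁ * k₁ = k₁ * s)
    (hk₂ : k₂ ≠ 0) (h2r : k₂ * k₂ = k₂ * r) (h2s : k₂ * k₂ = k₂ * (s + k₁)) :
    k₁ * k₂ = 0 ∧ k₁ * k₁ = k₁ * (k₁ + k₂) ∧
      (k₁ + k₂) * (k₁ + k₂) = (k₁ + k₂) * r ∧
      (k₁ + k₂) * (k₁ + k₂) = (k₁ + k₂) * s :=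
  stmt_7_general r s k₁ k₂ h1r h1s h2r h2s
end

section
/- Suppose R and S are reduced rings, R is rr-good, and φ : R → S is a surjective ring homomorphism. If s, s' ∈ S are rr-orthogonal (their only common rr-lower bound is 0) and r ∈ R satisfies φ(r) = s, then there exists r' ∈ R with φ(r') = s' such that r and r' are rr-orthogonal. -/
/-!
Lift `s'` to any `r₀` and put `e := r ∧ r₀`. Since `φ e` is a common rr-lower bound of `s` and
`s'`, it vanishes, so `r' := r₀ - e` still lifts `s'`. In a reduced ring `xy = 0` forces `yx = 0`;
with this one checks that any `c ≤ r, r₀ - e` satisfies `ce = 0`, hence `c ≤ r₀`, hence `c ≤ e`,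
so `c² = ce = 0` and `c = 0`.
-/

def RRLe {M : Type*} [Mul M] (a b : M) : Prop := a * a = a * b

infix:50 " ≤ᵣᵣ " => RRLe

theorem RRLe.map {M N F : Type*} [Mul M] [Mul N] [FunLike F M N] [MulHomClass F M N] (φ : F)
    {a b : M} (h : a ≤ᵣᵣ b) : φ a ≤ᵣᵣ φ b := by
  rw [RRLe, ← map_mul, ← map_mul, h]

section Reduced

variable {R : Type*} [Ring R] [IsReduced R] {b c e x y : R}

theorem mul_eq_zero_comm_of_isReduced (h : x * y = 0) : y * x = 0 :=
  sq_eq_zero_iff.mp <| by rw [sq, mul_assoc, ← mul_assoc x, h, zero_mul, mul_zero]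

theorem RRLe.mul_self_eq_mul_right (h : e ≤ᵣᵣ b) : e * e = b * e :=
  sub_eq_zero.mp <| by
    rw [← sub_mul]
    exact mul_eq_zero_comm_of_isReduced (by rw [mul_sub, h, sub_self])

theorem RRLe.mul_eq_zero_of_rrLe_sub (he : e ≤ᵣᵣ b) (hc : c ≤ᵣᵣ b - e) : c * e = 0 := by
  have hcce : c * c * e = 0 := by
    rw [hc, mul_assoc, sub_mul, ← he.mul_self_eq_mul_right, sub_self, mul_zero]
  have hcec : c * e * c = 0 :=
    mul_eq_zero_comm_of_isReduced (x := c) (by rw [← mul_assoc, hcce])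
  exact sq_eq_zero_iff.mp <| by rw [sq, ← mul_assoc, hcec, zero_mul]

theorem RRLe.of_rrLe_sub (he : e ≤ᵣᵣ b) (hc : c ≤ᵣᵣ b - e) : c ≤ᵣᵣ b := by
  rw [RRLe, hc, mul_sub, he.mul_eq_zero_of_rrLe_sub hc, sub_zero]

end Reduced

theorem stmt_11_general {R S : Type*} [Ring R] [IsReduced R] [Ring S]
    (hgood : ∀ a b : R, ∃ c : R, c * c = c * a ∧ c * c = c * b ∧
      ∀ d : R, d * d = d * a → d * d = d * b → d * d = d * c)
    (φ : R →+* S) (hsurj : Function.Surjective φ)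
    (s s' : S)
    (horth : ∀ t : S, t * t = t * s → t * t = t * s' → t = 0)
    (r : R) (hr : φ r = s) :
    ∃ r' : R, φ r' = s' ∧
      ∀ c : R, c * c = c * r → c * c = c * r' → c = 0 := by
  subst hr
  obtain ⟨r₀, rfl⟩ := hsurj s'
  obtain ⟨e, her, her₀, he_glb⟩ := hgood r r₀
  refine ⟨r₀ - e, ?_, fun c hcr hc => ?_⟩
  · rw [map_sub, horth (φ e) (RRLe.map φ her) (RRLe.map φ her₀), sub_zero]
  · have hce : c * e = 0 := RRLe.mul_eq_zero_of_rrLe_sub her₀ hc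
    have hcc : c * c = c * e := he_glb c hcr (RRLe.of_rrLe_sub her₀ hc)
    exact sq_eq_zero_iff.mp (by rw [sq, hcc, hce])

/-- rr-orthogonal pairs lift along surjections out of rr-good reduced rings. -/
theorem stmt_11 {R S : Type*} [Ring R] [IsReduced R] [Ring S] [IsReduced S]
    (hgood : ∀ a b : R, ∃ c : R, c * c = c * a ∧ c * c = c * b ∧
      ∀ d : R, d * d = d * a → d * d = d * b → d * d = d * c)
    (φ : R →+* S) (hsurj : Function.Surjective φ)
    (s s' : S)
    (horth : ∀ t : S, t * t = t * s → t * t = t * s' → t = 0)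
    (r : R) (hr : φ r = s) :
    ∃ r' : R, φ r' = s' ∧
      ∀ c : R, c * c = c * r → c * c = c * r' → c = 0 :=
  stmt_11_general hgood φ hsurj s s' horth r hr
end
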